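/- arXiv:2110.09445 — 4 statements merged into one kernel-verified Lean document; each statement's English description precedes it below -/
import Mathlib

section
/- Let B be a C*-algebra and A ⊆ B a closed *-subalgebra such that the set N(A,B) of normalizers spans a dense subspace of B and n*n ∈ A for every normalizer n. Then B = closure(B·A), i.e., the closed linear span of products ba with b ∈ B, a ∈ A equals B. -/
/-!
Every normalizer `n` is a limit of the elements `n * eₖ` with `eₖ = fₖ(n⋆n)` for continuous
`fₖ` vanishing at `0`; with `fₖ(x) = min 1 (k|x|)`,
`‖n - n eₖ‖² = ‖(n⋆n)(1 - eₖ)²‖ ≤ sup_x |x| (1 - fₖ x)² ≤ 1/k`.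
Since `n⋆n ∈ A` and `A` is closed, `eₖ ∈ A`, so every normalizer lies in the closed span of
`B·A`, and density of the span of the normalizers finishes the proof.
-/

open Filter Topology

section StateDefs
variable {E : Type*} [NonUnitalNormedRing E] [StarRing E] [NormedSpace ℂ E]

/-- A state on a (possibly non-unital) C*-algebra: a norm-one linear functional
which is positive, i.e. takes nonnegative real values on elements `star b * b`. -/
def IsState (ψ : E →L[ℂ] ℂ) : Prop :=
  ‖ψ‖ = 1 ∧ ∀ b : E, ∃ r : ℝ, 0 ≤ r ∧ ψ (star b * b) = (r : ℂ)

/-- A pure state: a state which is an extreme point of the state space. -/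
def IsPureState (ψ : E →L[ℂ] ℂ) : Prop :=
  IsState ψ ∧ ∀ ψ₁ ψ₂ : E →L[ℂ] ℂ, ∀ t : ℝ, IsState ψ₁ → IsState ψ₂ →
    0 < t → t < 1 → ψ = t • ψ₁ + (1 - t) • ψ₂ → ψ₁ = ψ

end StateDefs

variable {B : Type*} [NonUnitalNormedRing B] [StarRing B] [CStarRing B]
  [NormedSpace ℂ B] [IsScalarTower ℂ B B] [SMulCommClass ℂ B B] [StarModule ℂ B]
  [CompleteSpace B]

section
variable {C : Type*} [NonUnitalCStarAlgebra C]

lemma star_sub_mul_cfcₙ_mul_sub_mul_cfcₙ (n : C) {f : ℝ → ℝ} (hf : Continuous f)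
    (hf0 : f 0 = 0) :
    star (n - n * cfcₙ f (star n * n)) * (n - n * cfcₙ f (star n * n)) =
      cfcₙ (fun x => x * (1 - f x) ^ 2) (star n * n) := by
  have ha : IsSelfAdjoint (star n * n) := .star_mul_self n
  have hpoly : (fun x : ℝ => x * (1 - f x) ^ 2) =
      fun x => x - x * f x - f x * x + f x * x * f x := by
    funext x; ring
  rw [hpoly, cfcₙ_add .., cfcₙ_sub .., cfcₙ_sub .., cfcₙ_mul .., cfcₙ_mul .., cfcₙ_mul ..,
    cfcₙ_mul .., cfcₙ_id' ℝ (star n * n), star_sub, star_mul,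
    (cfcₙ_predicate f (star n * n)).star_eq]
  noncomm_ring

lemma norm_sub_mul_cfcₙ_sq_le (n : C) {f : ℝ → ℝ} (hf : Continuous f) (hf0 : f 0 = 0)
    {c : ℝ} (hc : ∀ x ∈ quasispectrum ℝ (star n * n), |x| * (1 - f x) ^ 2 ≤ c) :
    ‖n - n * cfcₙ f (star n * n)‖ ^ 2 ≤ c := by
  rw [sq, ← CStarRing.norm_star_mul_self, star_sub_mul_cfcₙ_mul_sub_mul_cfcₙ n hf hf0]
  refine norm_cfcₙ_le fun x hx => ?_
  simpa [abs_mul] using hc x hx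

lemma abs_mul_one_sub_min_sq_le {k : ℝ} (hk : 0 < k) (x : ℝ) :
    |x| * (1 - min 1 (k * |x|)) ^ 2 ≤ 1 / k := by
  rcases le_total 1 (k * |x|) with h | h
  · rw [min_eq_left h, sub_self, zero_pow two_ne_zero, mul_zero]; positivity
  · rw [min_eq_right h, le_div_iff₀ hk]
    have : 0 ≤ k * |x| := by positivity
    nlinarith

lemma tendsto_mul_cfcₙ_min_star_mul_self (n : C) :
    Tendsto (fun k : ℕ => n * cfcₙ (fun x : ℝ => min 1 (k * |x|)) (star n * n)) atTop (𝓝 n) := by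
  rw [tendsto_iff_norm_sub_tendsto_zero]
  have hsqrt : Tendsto (fun k : ℕ => √(1 / k)) atTop (𝓝 0) := by
    simpa using tendsto_one_div_atTop_nhds_zero_nat.sqrt
  refine squeeze_zero' (.of_forall fun _ => norm_nonneg _) ?_ hsqrt
  filter_upwards [eventually_gt_atTop 0] with k hk
  rw [norm_sub_rev, Real.le_sqrt (norm_nonneg _) (by positivity)]
  exact norm_sub_mul_cfcₙ_sq_le n (by fun_prop) (by simp)
    fun x _ => abs_mul_one_sub_min_sq_le (Nat.cast_pos.mpr hk) x

lemma mem_closure_span_mul_of_star_mul_self_mem (A : NonUnitalStarSubalgebra ℂ C)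
    [IsClosed (A : Set C)] {n : C} (hn : star n * n ∈ A) :
    n ∈ closure (Submodule.span ℂ {x : C | ∃ b : C, ∃ a ∈ A, x = b * a} : Set C) :=
  mem_closure_of_tendsto (tendsto_mul_cfcₙ_min_star_mul_self n)
    (.of_forall fun _ => Submodule.subset_span ⟨n, _, cfcₙ_mem _ hn, rfl⟩)

end

/-- If the normalizers span a dense subspace of `B` and `star n * n ∈ A` for every
normalizer `n`, then the closed linear span of products `b * a` (`b ∈ B`, `a ∈ A`)
is all of `B`. -/
theorem closure_span_mul_eq_univ
    (A : NonUnitalStarSubalgebra ℂ B) (hA : IsClosed (A : Set B))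
    (hdense : Dense (Submodule.span ℂ
      {b : B | ∀ a ∈ A, star b * a * b ∈ A ∧ b * a * star b ∈ A} : Set B))
    (hsq : ∀ n : B, (∀ a ∈ A, star n * a * n ∈ A ∧ n * a * star n ∈ A) →
      star n * n ∈ A) :
    closure (Submodule.span ℂ {x : B | ∃ b : B, ∃ a ∈ A, x = b * a} : Set B) =
      Set.univ := by
  let : NonUnitalCStarAlgebra B := { }
  have : IsClosed (A : Set B) := hA
  have hle : Submodule.span ℂ {b : B | ∀ a ∈ A, star b * a * b ∈ A ∧ b * a * star b ∈ A} ≤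
      (Submodule.span ℂ {x : B | ∃ b : B, ∃ a ∈ A, x = b * a}).topologicalClosure :=
    Submodule.span_le.mpr fun n hn => mem_closure_span_mul_of_star_mul_self_mem A (hsq n hn)
  exact (dense_closure.mp (hdense.mono hle)).closure_eq
end

section
/- Let B be a unital C*-algebra and A ⊆ B a unital abelian C*-subalgebra. If E, F : B → A are conditional expectations such that for every character x of A there is a unique state on B extending x, then E = F. -/
open Filter Topology

variable {B : Type*} [NormedRing B] [StarRing B] [CStarRing B]
  [NormedAlgebra ℂ B] [StarModule ℂ B] [CompleteSpace B]

/-- A conditional expectation from `B` onto the subalgebra `A`: a contractive,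
positive, unital, `A`-bimodular projection of `B` onto `A`. -/
def IsCondExp (A : StarSubalgebra ℂ B) (E : B →L[ℂ] B) : Prop :=
  (∀ b : B, E b ∈ A) ∧ (∀ a ∈ A, E a = a) ∧ ‖(E : B →L[ℂ] B)‖ ≤ 1 ∧
  (∀ b : B, ∃ c : B, E (star b * b) = star c * c) ∧
  (∀ a ∈ A, ∀ b : B, E (a * b) = a * E b ∧ E (b * a) = E b * a)

/-- If every character of the abelian unital subalgebra `A` has a unique state
extension to `B`, then there is at most one conditional expectation `B → A`. -/
theorem condExp_unique (A : StarSubalgebra ℂ B)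
    (habel : ∀ a ∈ A, ∀ a' ∈ A, a * a' = a' * a)
    (huniq : ∀ x : ↥A →ₐ[ℂ] ℂ,
      ∃! ψ : B →L[ℂ] ℂ, IsState ψ ∧ ∀ a : ↥A, ψ ↑a = x a)
    (E F : B →L[ℂ] B) (hE : IsCondExp A E) (hF : IsCondExp A F) :
    E = F := by
  rcases subsingleton_or_nontrivial B with hB | hB
  · ext b; exact Subsingleton.elim _ _
  letI : CStarAlgebra B :=
    { ‹NormedRing B›, ‹StarRing B›, ‹CStarRing B›, ‹NormedAlgebra ℂ B›, ‹StarModule ℂ B›,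
      ‹CompleteSpace B› with }
  haveI hclosed : IsClosed ((A.topologicalClosure : StarSubalgebra ℂ B) : Set B) :=
    A.isClosed_topologicalClosure
  haveI : CompleteSpace ↥A.topologicalClosure := hclosed.completeSpace_coe
  haveI : Nontrivial ↥A.topologicalClosure :=
    ⟨0, 1, fun h => zero_ne_one (α := B) (congrArg Subtype.val h)⟩
  have hle : A ≤ A.topologicalClosure := A.le_topologicalClosure
  have hcomm : ∀ u v : ↥A.topologicalClosure, u * v = v * u :=
    (A.commRingTopologicalClosure fun u v => Subtype.ext (habel u u.2 v v.2)).mul_comm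
  letI : CommCStarAlgebra ↥A.topologicalClosure :=
    { (inferInstance : CStarAlgebra ↥A.topologicalClosure) with mul_comm := hcomm }
  have key : ∀ (b : B) (φ : WeakDual.characterSpace ℂ ↥A.topologicalClosure),
      φ ⟨E b, hle (hE.1 b)⟩ = φ ⟨F b, hle (hF.1 b)⟩ := by
    intro b φ
    have mkState : ∀ (G : B →L[ℂ] B) (hG : IsCondExp A G),
        ∃ ψ : B →L[ℂ] ℂ, (∀ u : B, ψ u = φ ⟨G u, hle (hG.1 u)⟩) ∧ IsState ψ ∧
          ∀ a : ↥A, ψ ↑a = φ ⟨(a : B), hle a.2⟩ := by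
      intro G hG
      obtain ⟨hmem, hfix, hnorm, hpos, -⟩ := hG
      let ℓ : B →ₗ[ℂ] ℂ :=
        { toFun := fun u => φ ⟨G u, hle (hmem u)⟩
          map_add' := fun u v => by
            have h : (⟨G (u + v), hle (hmem _)⟩ : ↥A.topologicalClosure)
                = ⟨G u, hle (hmem u)⟩ + ⟨G v, hle (hmem v)⟩ := Subtype.ext (map_add G u v)
            show φ ⟨G (u + v), hle (hmem _)⟩ = φ ⟨G u, hle (hmem u)⟩ + φ ⟨G v, hle (hmem v)⟩
            rw [h, map_add]
          map_smul' := fun c u => by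
            have h : (⟨G (c • u), hle (hmem _)⟩ : ↥A.topologicalClosure)
                = c • ⟨G u, hle (hmem u)⟩ := Subtype.ext (map_smul G c u)
            show φ ⟨G (c • u), hle (hmem _)⟩ = _
            rw [h, map_smul]; rfl }
      have hbound : ∀ u : B, ‖ℓ u‖ ≤ 1 * ‖u‖ := fun u => by
        have h1 : ‖φ (⟨G u, hle (hmem u)⟩ : ↥A.topologicalClosure)‖
            ≤ ‖(⟨G u, hle (hmem u)⟩ : ↥A.topologicalClosure)‖ :=
          AlgHom.norm_apply_le_self φ _
        have h2 : ‖(⟨G u, hle (hmem u)⟩ : ↥A.topologicalClosure)‖ = ‖G u‖ := rfl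
        have h3 : ‖G u‖ ≤ ‖G‖ * ‖u‖ := G.le_opNorm u
        have h4 : ‖G‖ * ‖u‖ ≤ 1 * ‖u‖ := by
          gcongr
        calc ‖ℓ u‖ ≤ ‖G u‖ := by rw [← h2]; exact h1
          _ ≤ 1 * ‖u‖ := h3.trans h4
      let ψ : B →L[ℂ] ℂ := ℓ.mkContinuous 1 hbound
      have hψ : ∀ u : B, ψ u = φ ⟨G u, hle (hmem u)⟩ := fun u => rfl
      have hψ1 : ψ 1 = 1 := by
        have h : (⟨G 1, hle (hmem 1)⟩ : ↥A.topologicalClosure) = 1 :=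
          Subtype.ext (hfix 1 A.one_mem)
        rw [hψ, h, map_one]
      refine ⟨ψ, hψ, ⟨?_, ?_⟩, ?_⟩
      · refine le_antisymm ?_ ?_
        · simpa using ℓ.mkContinuous_norm_le zero_le_one hbound
        · calc (1 : ℝ) = ‖ψ 1‖ := by rw [hψ1]; simp
            _ ≤ ‖ψ‖ * ‖(1 : B)‖ := ψ.le_opNorm 1
            _ = ‖ψ‖ := by rw [norm_one, mul_one]
      · intro u
        obtain ⟨c, hc⟩ := hpos u
        set p : ↥A.topologicalClosure := ⟨G (star u * u), hle (hmem _)⟩ with hp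
        have hz : φ p ∈ spectrum ℂ p := AlgHom.apply_mem_spectrum φ p
        have hz' : φ p ∈ spectrum ℂ (star c * c) := by
          rw [StarSubalgebra.spectrum_eq] at hz
          rwa [show (p : B) = star c * c from hc] at hz
        have hsa : IsSelfAdjoint (star c * c) := IsSelfAdjoint.star_mul_self c
        have hre : φ p = ((φ p).re : ℂ) := hsa.mem_spectrum_eq_re hz'
        have hmem' : ((φ p).re : ℝ) ∈ spectrum ℝ (star c * c) := by
          rw [← spectrum.algebraMap_mem_iff ℂ]
          rw [show algebraMap ℝ ℂ (φ p).re = ((φ p).re : ℂ) from rfl, ← hre]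
          exact hz'
        exact ⟨(φ p).re, spectrum_star_mul_self_nonneg _ hmem', hre⟩
      · intro a
        have h : (⟨G ↑a, hle (hmem _)⟩ : ↥A.topologicalClosure) = ⟨(a : B), hle a.2⟩ :=
          Subtype.ext (hfix a a.2)
        rw [hψ, h]
    obtain ⟨ψE, hψE, hSE, hextE⟩ := mkState E hE
    obtain ⟨ψF, hψF, hSF, hextF⟩ := mkState F hF
    let x : ↥A →ₐ[ℂ] ℂ :=
      ((WeakDual.CharacterSpace.toAlgHom φ).comp (StarSubalgebra.inclusion hle).toAlgHom)
    obtain ⟨ψ₀, -, hun⟩ := huniq x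
    have hEeq : ψE = ψ₀ := hun ψE ⟨hSE, fun a => hextE a⟩
    have hFeq : ψF = ψ₀ := hun ψF ⟨hSF, fun a => hextF a⟩
    calc φ ⟨E b, hle (hE.1 b)⟩ = ψE b := (hψE b).symm
      _ = ψF b := by rw [hEeq, hFeq]
      _ = φ ⟨F b, hle (hF.1 b)⟩ := hψF b
  ext b
  have h2 : (⟨E b, hle (hE.1 b)⟩ : ↥A.topologicalClosure) = ⟨F b, hle (hF.1 b)⟩ :=
    (gelfandTransform_isometry ↥A.topologicalClosure).injective
      (ContinuousMap.ext fun φ => key b φ)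
  exact congrArg Subtype.val h2
end

section
/- Let B be a C*-algebra, A ⊆ B an abelian closed *-subalgebra satisfying the extension property, and for each character x of A let ψ_x be the unique state extension to B. If E : B → C^b(X) is defined by E(b)(x) = ψ_x(b) and E(b) is continuous for each b, then E(ab) = a·E(b) = E(ba) for all a ∈ A, b ∈ B implies that E(b) vanishes at infinity, i.e., E(b) ∈ A ≅ C₀(X). -/
open Filter Topology

variable {B : Type*} [NonUnitalNormedRing B] [StarRing B] [CStarRing B]
  [NormedSpace ℂ B] [IsScalarTower ℂ B B] [SMulCommClass ℂ B B] [StarModule ℂ B]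
  [CompleteSpace B]


lemma aux_mem {X : Type*} [TopologicalSpace X] (a : ZeroAtInftyContinuousMap X ℂ)
    (g : BoundedContinuousFunction X ℂ) :
    a.toBCF * g ∈ Set.range (ZeroAtInftyContinuousMap.toBCF : ZeroAtInftyContinuousMap X ℂ → _) := by
  refine ⟨⟨(a.toBCF * g).toContinuousMap, ?_⟩, rfl⟩
  rw [tendsto_zero_iff_norm_tendsto_zero]
  refine squeeze_zero (g := fun x => ‖a x‖ * ‖g‖) (fun x => norm_nonneg _) (fun x => ?_) ?_
  · show ‖a x * g x‖ ≤ ‖a x‖ * ‖g‖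
    rw [norm_mul]
    exact mul_le_mul_of_nonneg_left (g.norm_coe_le_norm x) (norm_nonneg _)
  · have := (tendsto_zero_iff_norm_tendsto_zero.mp a.zero_at_infty').mul_const ‖g‖
    simpa using this

/-- If `A ≅ C₀(X)` sits in `B` containing an approximate unit of `B` drawn from
`A`, and `E : B → C^b(X)` is a contractive linear map satisfying the module
property `E(ab) = a·E(b) = E(ba)`, then each `E b` vanishes at infinity. -/
theorem condExp_range_zeroAtInfty {X : Type*} [TopologicalSpace X]
    (ι₀ : ZeroAtInftyContinuousMap X ℂ →⋆ₙₐ[ℂ] B) (hinj : Function.Injective ι₀)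
    (E : B →ₗ[ℂ] BoundedContinuousFunction X ℂ)
    (hcontr : ∀ b : B, ‖E b‖ ≤ ‖b‖)
    (hmod : ∀ (a : ZeroAtInftyContinuousMap X ℂ) (b : B),
      E (ι₀ a * b) = a.toBCF * E b ∧ E (b * ι₀ a) = a.toBCF * E b)
    {κ : Type*} (l : Filter κ) [l.NeBot] (u : κ → ZeroAtInftyContinuousMap X ℂ)
    (happrox : ∀ b : B, Tendsto (fun i => ι₀ (u i) * b) l (𝓝 b) ∧
      Tendsto (fun i => b * ι₀ (u i)) l (𝓝 b))
    (b : B) :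
    ∃ f : ZeroAtInftyContinuousMap X ℂ, E b = f.toBCF := by
  have hlip : LipschitzWith 1 E := by
    refine LipschitzWith.of_dist_le_mul fun x y => ?_
    rw [dist_eq_norm, dist_eq_norm, ← map_sub]
    simpa using hcontr (x - y)
  have h1 : Tendsto (fun i => E (ι₀ (u i) * b)) l (𝓝 (E b)) :=
    (hlip.continuous.tendsto _).comp (happrox b).1
  have h2 : ∀ i, E (ι₀ (u i) * b) ∈
      Set.range (ZeroAtInftyContinuousMap.toBCF : ZeroAtInftyContinuousMap X ℂ → _) := by
    intro i
    rw [(hmod (u i) b).1]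
    exact aux_mem _ _
  obtain ⟨f, hf⟩ := (ZeroAtInftyContinuousMap.isClosed_range_toBCF (α := X) (β := ℂ)).mem_of_tendsto h1
    (Eventually.of_forall h2)
  exact ⟨f, hf.symm⟩
end

section
/- Let B be a unital C*-algebra, A ⊆ B an abelian unital C*-subalgebra, and suppose every pure state of A extends uniquely to a state of B. Define Δ = {b ∈ B : ψ_x(b*b) = 0 for all characters x of A}, where ψ_x is the unique state extension of the character x. Then Δ is a closed subspace of B, and Δ coincides with the left kernel {b ∈ B : E(b*b) = 0} of any conditional expectation E : B → A. -/
/-!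
A positive functional φ makes `(b, c) ↦ φ (b⋆ c)` a semi-inner product, so by Cauchy–Schwarz its
null set `{b | φ (b⋆ b) = 0}` is a subspace; Δ is the intersection of these (closed) subspaces
for the states ψ_x. If E is a conditional expectation, ψ_x ∘ E is again a state extending x, hence
equals ψ_x, so ψ_x (b⋆ b) = x (E (b⋆ b)). Thus b ∈ Δ iff every character of A vanishes on
E (b⋆ b) ∈ A. As A is commutative, every element of A is normal and its spectrum consists of
character values (Gelfand theory in the closure of A), so this forces E (b⋆ b) = 0.
-/

open Filter Topology

variable {B : Type*} [NormedRing B] [StarRing B] [CStarRing B]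
  [NormedAlgebra ℂ B] [StarModule ℂ B] [CompleteSpace B]

open scoped ComplexOrder ComplexConjugate

section PositiveFunctional

variable {R : Type*} [NonUnitalRing R] [StarRing R] [Module ℂ R] [StarModule ℂ R]
  [SMulCommClass ℂ R R] [IsScalarTower ℂ R R]

lemma star_add_smul_mul_add_smul (a b : R) (t : ℂ) :
    star (a + t • b) * (a + t • b) = star a * a + t • (star a * b) +
      conj t • (star b * a) + (t * conj t) • (star b * b) := by
  simp only [star_add, star_smul, add_mul, mul_add, smul_add, smul_mul_assoc, mul_smul_comm,
    smul_smul, Complex.star_def]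
  abel

namespace LinearMap

variable {φ : R →ₗ[ℂ] ℂ} (hφ : ∀ b : R, 0 ≤ φ (star b * b))
include hφ

lemma conj_apply_star_mul (a b : R) : conj (φ (star a * b)) = φ (star b * a) := by
  -- `φ ((a + t b)⋆ (a + t b))` is real; `t = 1` and `t = i` give the imaginary and real parts.
  have him : ∀ t : ℂ, (t * φ (star a * b) + conj t * φ (star b * a)).im = 0 := by
    intro t
    have h := (Complex.nonneg_iff.1 (hφ (a + t • b))).2
    have ha := (Complex.nonneg_iff.1 (hφ a)).2
    have hb := (Complex.nonneg_iff.1 (hφ b)).2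
    rw [star_add_smul_mul_add_smul] at h
    simp only [map_add, map_smul, smul_eq_mul, Complex.add_im, Complex.mul_im, Complex.mul_re,
      Complex.conj_re, Complex.conj_im] at h ⊢
    linear_combination ha + (t.re * t.re - t.im * -t.im) * hb - h
  have h1 := him 1
  have hI := him Complex.I
  simp only [one_mul, map_one, Complex.add_im, Complex.conj_I, neg_mul, Complex.mul_im,
    Complex.I_re, zero_mul, Complex.I_im, zero_add, Complex.neg_im] at h1 hI
  exact Complex.ext (by rw [Complex.conj_re]; linarith) (by rw [Complex.conj_im]; linarith)

abbrev preInnerProductSpaceCore : PreInnerProductSpace.Core ℂ R where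
  inner a b := φ (star a * b)
  conj_inner_symm a b := conj_apply_star_mul hφ b a
  re_inner_nonneg a := (Complex.nonneg_iff.1 (hφ a)).1
  add_left a b c := by simp only [star_add, add_mul, map_add]
  smul_left a b r := by
    simp only [star_smul, smul_mul_assoc, map_smul, smul_eq_mul, Complex.star_def]

lemma apply_star_mul_eq_zero_of_apply_star_mul_self_eq_zero {b : R}
    (hb : φ (star b * b) = 0) (c : R) : φ (star c * b) = 0 := by
  let := preInnerProductSpaceCore hφ
  have h := InnerProductSpace.Core.inner_mul_inner_self_le (𝕜 := ℂ) c b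
  change ‖φ (star c * b)‖ * ‖φ (star b * c)‖ ≤ (φ (star c * c)).re * (φ (star b * b)).re at h
  rw [← conj_apply_star_mul hφ c b, Complex.norm_conj, hb, Complex.zero_re, mul_zero] at h
  exact norm_eq_zero.1 (mul_self_eq_zero.1 (le_antisymm h (mul_self_nonneg _)))

def leftKernel : Submodule ℂ R where
  carrier := {b | φ (star b * b) = 0}
  zero_mem' := by simp
  add_mem' {a b} ha hb := by
    change φ (star (a + b) * (a + b)) = 0
    simp only [star_add, add_mul, mul_add, map_add,
      apply_star_mul_eq_zero_of_apply_star_mul_self_eq_zero hφ ha,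
      apply_star_mul_eq_zero_of_apply_star_mul_self_eq_zero hφ hb, add_zero]
  smul_mem' r b hb := by
    change φ (star (r • b) * (r • b)) = 0
    rw [star_smul, smul_mul_assoc, mul_smul_comm, map_smul, map_smul,
      show φ (star b * b) = 0 from hb, smul_zero, smul_zero]

end LinearMap

end PositiveFunctional

namespace StarSubalgebra

variable {𝒜 : Type*} [CStarAlgebra 𝒜] (A : StarSubalgebra ℂ 𝒜)
  (habel : ∀ a ∈ A, ∀ a' ∈ A, a * a' = a' * a)
include habel

lemma exists_algHom_apply_eq_of_mem_spectrum {a : 𝒜} (ha : a ∈ A) {z : ℂ}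
    (hz : z ∈ spectrum ℂ a) : ∃ x : A →ₐ[ℂ] ℂ, x ⟨a, ha⟩ = z := by
  let : CommRing A.topologicalClosure :=
    A.commRingTopologicalClosure fun x y => Subtype.ext (habel _ x.2 _ y.2)
  let : NormedCommRing A.topologicalClosure := { mul_comm := mul_comm }
  have : CompleteSpace A.topologicalClosure := A.isClosed_topologicalClosure.completeSpace_coe
  let ι := StarSubalgebra.inclusion A.le_topologicalClosure
  obtain ⟨f, hf⟩ := WeakDual.CharacterSpace.mem_spectrum_iff_exists.mp
    (spectrum.subset_subalgebra (ι ⟨a, ha⟩) hz)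
  exact ⟨(WeakDual.CharacterSpace.equivAlgHom f).comp ι.toAlgHom, hf⟩

lemma eq_zero_of_forall_algHom_apply_eq_zero {a : 𝒜} (ha : a ∈ A)
    (h : ∀ x : A →ₐ[ℂ] ℂ, x ⟨a, ha⟩ = 0) : a = 0 := by
  have : IsStarNormal a := ⟨habel _ (star_mem ha) _ ha⟩
  refine CFC.eq_zero_of_spectrum_subset_zero (R := ℂ) a fun z hz => ?_
  obtain ⟨x, rfl⟩ := exists_algHom_apply_eq_of_mem_spectrum A habel ha hz
  exact h x

end StarSubalgebra

lemma IsState.nonneg {C : Type*} [NonUnitalNormedRing C] [StarRing C] [NormedSpace ℂ C]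
    {φ : C →L[ℂ] ℂ} (hφ : IsState φ) (b : C) : 0 ≤ φ (star b * b) := by
  obtain ⟨r, hr, h⟩ := hφ.2 b
  exact h ▸ Complex.zero_le_real.2 hr

namespace IsState

variable {C : Type*} [NormedRing C] [StarRing C] [CStarRing C] [NormedAlgebra ℂ C]
  {φ : C →L[ℂ] ℂ}

lemma comp (hφ : IsState φ) (hφ1 : φ 1 = 1) {T : C →L[ℂ] C} (hT : ‖T‖ ≤ 1) (hT1 : T 1 = 1)
    (hTpos : ∀ b : C, ∃ c : C, T (star b * b) = star c * c) : IsState (φ.comp T) := by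
  have : Nontrivial C := ⟨⟨1, 0, fun h => by simp [h] at hφ1⟩⟩
  refine ⟨le_antisymm ?_ ?_, fun b => ?_⟩
  · calc ‖φ.comp T‖ ≤ ‖φ‖ * ‖T‖ := φ.opNorm_comp_le T
      _ ≤ 1 := by rw [hφ.1, one_mul]; exact hT
  · calc (1 : ℝ) = ‖φ.comp T 1‖ := by simp [hT1, hφ1]
      _ ≤ ‖φ.comp T‖ := by simpa using (φ.comp T).le_opNorm 1
  · obtain ⟨c, hc⟩ := hTpos b
    simpa [hc] using hφ.2 c

end IsState

omit [CompleteSpace B] in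
lemma IsCondExp.apply_eq {A : StarSubalgebra ℂ B} {E : B →L[ℂ] B} (hE : IsCondExp A E)
    {x : A →ₐ[ℂ] ℂ} {ψ : B →L[ℂ] ℂ} (hψ : IsState ψ) (hext : ∀ a : A, ψ a = x a)
    (huniq : ∀ ρ : B →L[ℂ] ℂ, IsState ρ → (∀ a : A, ρ a = x a) → ρ = ψ) (b : B) :
    ψ (E b) = ψ b := by
  obtain ⟨-, hfix, hnorm, hpos, -⟩ := hE
  have hψ1 : ψ 1 = 1 := by simpa using hext 1
  have hcomp : ψ.comp E = ψ :=
    huniq _ (hψ.comp hψ1 hnorm (hfix 1 A.one_mem) hpos) fun a => by simp [hfix a a.2, hext a]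
  exact DFunLike.congr_fun hcomp b

/-- The "opaque" set `Δ = {b : ψ_x (b* b) = 0 for all characters x}` (with `ψ_x`
the unique state extension of the character `x` of the abelian subalgebra `A`) is
a closed subspace of `B`, and coincides with the left kernel of any conditional
expectation `E : B → A`. -/
theorem opaque_eq_leftKernel (A : StarSubalgebra ℂ B)
    (habel : ∀ a ∈ A, ∀ a' ∈ A, a * a' = a' * a)
    (ψ : (↥A →ₐ[ℂ] ℂ) → (B →L[ℂ] ℂ))
    (hstate : ∀ x, IsState (ψ x))
    (hext : ∀ x, ∀ a : ↥A, ψ x ↑a = x a)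
    (huniq : ∀ (x : ↥A →ₐ[ℂ] ℂ) (ρ : B →L[ℂ] ℂ), IsState ρ →
      (∀ a : ↥A, ρ ↑a = x a) → ρ = ψ x) :
    (∃ S : Submodule ℂ B,
        (S : Set B) = {b : B | ∀ x, ψ x (star b * b) = 0}) ∧
    IsClosed {b : B | ∀ x, ψ x (star b * b) = 0} ∧
    ∀ E : B →L[ℂ] B, IsCondExp A E →
      {b : B | ∀ x, ψ x (star b * b) = 0} = {b : B | E (star b * b) = 0} := by
  let : CStarAlgebra B := {}
  refine ⟨⟨⨅ x, (ψ x : B →ₗ[ℂ] ℂ).leftKernel (hstate x).nonneg, ?_⟩, ?_, fun E hE => ?_⟩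
  · ext b
    simp [LinearMap.leftKernel]
  · rw [Set.ofPred_forall]
    exact isClosed_iInter fun x => isClosed_eq (by fun_prop) continuous_const
  · ext b
    have hchar : ∀ x, ψ x (star b * b) = x ⟨E (star b * b), hE.1 _⟩ := fun x => by
      rw [← hE.apply_eq (hstate x) (hext x) (huniq x), ← hext x ⟨_, hE.1 _⟩]
    simp only [Set.mem_ofPred_eq, hchar]
    refine ⟨A.eq_zero_of_forall_algHom_apply_eq_zero habel (hE.1 _), fun h x => ?_⟩
    rw [show (⟨E (star b * b), hE.1 _⟩ : A) = 0 from Subtype.ext h, map_zero]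
end
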